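/- Let μ and ν be probability densities on R^d proportional to e^{f} and e^{g} respectively with f - g bounded. If h: R^d → R^d satisfies ⟨h, Mh⟩ decomposition as in the covariance comparison, then for any unit vector h and the measures p^{t,x}, ν^{t,x} above, the difference of second moments obeys: h^⊤(∫ H_p^{⊗2} dp^{t,x} - ∫ H_ν^{⊗2} dν^{t,x}) h is bounded by a finite sum of products of terms of the form (∫ |h^⊤ H_ν(y,x)|^{θ1} |e^{a(y)} Q_t q(x)/Q_t r(x) - 1|^{θ2} dν^{t,x}(y))^{θ3}, where the exponents satisfy Σ θ1·θ3 = 2 and max θ2·θ3 = 1. -/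

import Mathlib

open MeasureTheory
open scoped InnerProductSpace BigOperators

/-- The density `φ^{t,x}(y)` of the Gaussian with mean `e^{-t} x` and
covariance `(1 - e^{-2t}) Id`. -/
noncomputable def ouKernel (d : ℕ) (t : ℝ) (x y : EuclideanSpace ℝ (Fin d)) : ℝ :=
  (2 * Real.pi * (1 - Real.exp (-2 * t))) ^ (-(d : ℝ) / 2) *
    Real.exp (-‖y - Real.exp (-t) • x‖ ^ 2 / (2 * (1 - Real.exp (-2 * t))))

/-- `Q_t g(x) = ∫ g(y) φ^{t,x}(y) dy`. -/
noncomputable def QtOf {d : ℕ} (g : EuclideanSpace ℝ (Fin d) → ℝ) (t : ℝ)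
    (x : EuclideanSpace ℝ (Fin d)) : ℝ :=
  ∫ y, g y * ouKernel d t x y

/-- The probability measure with density proportional to `g(y) φ^{t,x}(y)`. -/
noncomputable def tiltedOf {d : ℕ} (g : EuclideanSpace ℝ (Fin d) → ℝ) (t : ℝ)
    (x : EuclideanSpace ℝ (Fin d)) : Measure (EuclideanSpace ℝ (Fin d)) :=
  volume.withDensity fun y => ENNReal.ofReal (g y * ouKernel d t x y / QtOf g t x)

/-- The mean of such a measure. -/
noncomputable def meanOf {d : ℕ} (g : EuclideanSpace ℝ (Fin d) → ℝ) (t : ℝ)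
    (x : EuclideanSpace ℝ (Fin d)) : EuclideanSpace ℝ (Fin d) :=
  ∫ z, z ∂(tiltedOf g t x)

/-!
With `w = e^{a} Q_t q(x) / Q_t r(x)` one has `p^{t,x} = w · ν^{t,x}`, so `∫ w dν^{t,x} = 1`.
Put `G = ⟪h, H_ν⟫`, which has `ν^{t,x}`-mean zero. The means differ in direction `h` by
`δ = ∫ w G dν^{t,x} = ∫ (w - 1) G dν^{t,x}`, and expanding `∫ w (G - δ)² dν^{t,x}` gives
`h^⊤ (Cov p^{t,x} - Cov ν^{t,x}) h = ∫ (w - 1) G² dν^{t,x} - δ²`. Taking absolute values inside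
the integrals bounds this by `∫ |G|² |w - 1| dν^{t,x} + (∫ |G| |w - 1| dν^{t,x})²`.
-/

open Real

section WeightedMeasure

variable {α : Type*} [MeasurableSpace α] {ν : Measure α} {w G : α → ℝ} {C : ℝ}

theorem integral_withDensity_ofReal_eq_integral_smul {E : Type*} [NormedAddCommGroup E]
    [NormedSpace ℝ E] (hw : Measurable w) (hw0 : ∀ y, 0 ≤ w y) (g : α → E) :
    ∫ y, g y ∂ν.withDensity (fun y => ENNReal.ofReal (w y)) = ∫ y, w y • g y ∂ν := by
  rw [integral_withDensity_eq_integral_toReal_smul hw.ennreal_ofReal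
    (ae_of_all _ fun _ => ENNReal.ofReal_lt_top)]
  simp_rw [ENNReal.toReal_ofReal (hw0 _)]

theorem integral_eq_one_of_isProbabilityMeasure_withDensity_ofReal (hw : Measurable w)
    (hw0 : ∀ y, 0 ≤ w y) [IsProbabilityMeasure (ν.withDensity fun y => ENNReal.ofReal (w y))] :
    ∫ y, w y ∂ν = 1 := by
  simpa using (integral_withDensity_ofReal_eq_integral_smul (ν := ν) hw hw0 fun _ => (1 : ℝ)).symm

theorem integral_mul_sub_integral_mul_sq_sub_integral_sq [IsFiniteMeasure ν]
    (hw : AEStronglyMeasurable w ν) (hwC : ∀ y, |w y| ≤ C) (hw1 : ∫ y, w y ∂ν = 1)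
    (hG : Integrable G ν) (hG2 : Integrable (fun y => G y ^ 2) ν) (hG0 : ∫ y, G y ∂ν = 0) :
    ∫ y, w y * (G y - ∫ z, w z * G z ∂ν) ^ 2 ∂ν - ∫ y, G y ^ 2 ∂ν
      = ∫ y, (w y - 1) * G y ^ 2 ∂ν - (∫ y, (w y - 1) * G y ∂ν) ^ 2 := by
  have hwC' : ∀ᵐ y ∂ν, ‖w y‖ ≤ C := ae_of_all _ hwC
  have hw_int : Integrable w ν := by simpa using (integrable_const 1).bdd_mul hw hwC'
  have hwG : Integrable (fun y => w y * G y) ν := hG.bdd_mul hw hwC'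
  have hwG2 : Integrable (fun y => w y * G y ^ 2) ν := hG2.bdd_mul hw hwC'
  set δ := ∫ z, w z * G z ∂ν
  have hexpand : ∫ y, w y * (G y - δ) ^ 2 ∂ν
      = ∫ y, w y * G y ^ 2 ∂ν - 2 * δ * δ + δ ^ 2 * ∫ y, w y ∂ν := by
    have hI : Integrable (fun y => 2 * δ * (w y * G y)) ν := hwG.const_mul _
    have hI' : Integrable (fun y => w y * G y ^ 2 - 2 * δ * (w y * G y)) ν := hwG2.sub hI
    calc ∫ y, w y * (G y - δ) ^ 2 ∂ν
        = ∫ y, (w y * G y ^ 2 - 2 * δ * (w y * G y) + δ ^ 2 * w y) ∂ν := by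
          congr 1 with y; ring
      _ = _ := by
          rw [integral_add hI' (hw_int.const_mul _), integral_sub hwG2 hI,
            integral_const_mul, integral_const_mul]
  have hshift : ∫ y, (w y - 1) * G y ∂ν = δ := by
    simp only [sub_one_mul]
    rw [integral_sub hwG hG, hG0, sub_zero]
  rw [hexpand, hshift]
  simp only [sub_one_mul]
  rw [integral_sub hwG2 hG2, hw1]
  ring

theorem abs_integral_sub_one_mul_sq_sub_sq_le :
    |∫ y, (w y - 1) * G y ^ 2 ∂ν - (∫ y, (w y - 1) * G y ∂ν) ^ 2|
      ≤ ∫ y, |G y| ^ 2 * |w y - 1| ∂ν + (∫ y, |G y| * |w y - 1| ∂ν) ^ 2 := by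
  have hsq : |∫ y, (w y - 1) * G y ^ 2 ∂ν| ≤ ∫ y, |G y| ^ 2 * |w y - 1| ∂ν :=
    abs_integral_le_integral_abs.trans_eq <| by simp only [abs_mul, abs_pow, mul_comm]
  have hlin : |∫ y, (w y - 1) * G y ∂ν| ≤ ∫ y, |G y| * |w y - 1| ∂ν :=
    abs_integral_le_integral_abs.trans_eq <| by simp only [abs_mul, mul_comm]
  calc _ ≤ |∫ y, (w y - 1) * G y ^ 2 ∂ν| + |(∫ y, (w y - 1) * G y ∂ν) ^ 2| := abs_sub _ _
    _ ≤ _ := by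
      rw [abs_pow]
      gcongr

end WeightedMeasure

section Covariance

variable {E : Type*} [NormedAddCommGroup E] [InnerProductSpace ℝ E] [CompleteSpace E]
  [MeasurableSpace E] {ν P : Measure E} {w : E → ℝ} {C : ℝ}

theorem integral_inner_sub_integral_sq_withDensity_sub
    [IsProbabilityMeasure ν] [IsProbabilityMeasure P]
    (hP : P = ν.withDensity fun y => ENNReal.ofReal (w y))
    (hw : Measurable w) (hw0 : ∀ y, 0 ≤ w y) (hwC : ∀ y, w y ≤ C) (hX : MemLp id 2 ν) (h : E) :
    ∫ y, ⟪h, y - ∫ z, z ∂P⟫_ℝ ^ 2 ∂P - ∫ y, ⟪h, y - ∫ z, z ∂ν⟫_ℝ ^ 2 ∂ν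
      = ∫ y, (w y - 1) * ⟪h, y - ∫ z, z ∂ν⟫_ℝ ^ 2 ∂ν
          - (∫ y, (w y - 1) * ⟪h, y - ∫ z, z ∂ν⟫_ℝ ∂ν) ^ 2 := by
  set mν := ∫ z, z ∂ν
  set mP := ∫ z, z ∂P
  set G := fun y => ⟪h, y - mν⟫_ℝ
  have hwC' : ∀ y, |w y| ≤ C := fun y => (abs_of_nonneg (hw0 y)).trans_le (hwC y)
  have hw1 : ∫ y, w y ∂ν = 1 := by
    subst hP
    exact integral_eq_one_of_isProbabilityMeasure_withDensity_ofReal hw hw0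
  have hX1 : Integrable (fun y => y) ν := hX.integrable one_le_two
  have hw_int : Integrable w ν := by
    simpa using (integrable_const (1 : ℝ)).bdd_mul hw.aestronglyMeasurable (ae_of_all _ hwC')
  have hwX : Integrable (fun y => w y • y) ν :=
    hX1.bdd_smul C hw.aestronglyMeasurable (ae_of_all _ hwC')
  have hG : MemLp G 2 ν := (hX.sub (memLp_const mν)).const_inner h
  have hG0 : ∫ y, G y ∂ν = 0 := by
    have hY : Integrable (fun y => y - mν) ν := hX1.sub (integrable_const mν)
    rw [integral_inner hY, integral_sub hX1 (integrable_const _)]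
    simp [mν]
  have hmean : ⟪h, mP - mν⟫_ℝ = ∫ y, w y * G y ∂ν := by
    have hshift : ∫ y, w y • (y - mν) ∂ν = mP - mν := by
      simp_rw [smul_sub]
      rw [integral_sub hwX (hw_int.smul_const _), integral_smul_const, hw1, one_smul]
      simp only [mP, hP, integral_withDensity_ofReal_eq_integral_smul hw hw0]
    have hwY : Integrable (fun y => w y • (y - mν)) ν := by
      simp_rw [smul_sub]
      exact hwX.sub (hw_int.smul_const mν)
    rw [← hshift, ← integral_inner hwY]
    simp only [inner_smul_right, G]
  have hPG : ∫ y, ⟪h, y - mP⟫_ℝ ^ 2 ∂P = ∫ y, w y * (G y - ∫ z, w z * G z ∂ν) ^ 2 ∂ν := by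
    rw [← hmean, hP, integral_withDensity_ofReal_eq_integral_smul hw hw0]
    congr 1 with y
    simp only [G, smul_eq_mul, inner_sub_right]
    ring
  rw [hPG]
  exact integral_mul_sub_integral_mul_sq_sub_integral_sq hw.aestronglyMeasurable hwC' hw1
    (hG.integrable one_le_two) hG.integrable_sq hG0

end Covariance

theorem tiltedOf_eq_withDensity {d : ℕ} {q a r : EuclideanSpace ℝ (Fin d) → ℝ} {t : ℝ}
    {x : EuclideanSpace ℝ (Fin d)} (hq : Measurable q) (ha : Measurable a)
    (hr : ∀ y, r y = q y * exp (a y)) (hQq : 0 < QtOf q t x) (hQr : 0 < QtOf r t x) :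
    tiltedOf r t x = (tiltedOf q t x).withDensity
      fun y => ENNReal.ofReal (exp (a y) * QtOf q t x / QtOf r t x) := by
  have hK : Measurable (ouKernel d t x) := by unfold ouKernel; fun_prop
  rw [tiltedOf, tiltedOf, ← withDensity_mul _ (by fun_prop) (by fun_prop)]
  congr 1 with y
  rw [Pi.mul_apply, ← ENNReal.ofReal_mul' (by positivity), hr]
  congr 1
  field_simp

/-- Each `θ` lists the exponents `(θ₁, θ₂, θ₃)` of the three factors; the factors `(0, 0, 1)`
equal `∫ 1 dν = 1` and only pad the terms `∫ |G|² |w - 1|` and `(∫ |G| |w - 1|)²` to three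
factors. -/
def covarianceExponents : Finset (Fin 3 → ℕ × ℕ × ℕ) :=
  {![(2, 1, 1), (0, 0, 1), (0, 0, 1)], ![(1, 1, 1), (1, 1, 1), (0, 0, 1)]}

theorem covarianceExponents_spec : ∀ θ ∈ covarianceExponents,
    (∑ i, (θ i).1 * (θ i).2.2) = 2 ∧ (Finset.univ.sup fun i => (θ i).2.1 * (θ i).2.2) = 1 := by
  decide

theorem sum_covarianceExponents {α : Type*} [MeasurableSpace α] (ν : Measure α)
    [IsProbabilityMeasure ν] (F V : α → ℝ) :
    ∑ θ ∈ covarianceExponents, ∏ i : Fin 3,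
        (∫ y, |F y| ^ (θ i).1 * |V y| ^ (θ i).2.1 ∂ν) ^ (θ i).2.2
      = ∫ y, |F y| ^ 2 * |V y| ∂ν + (∫ y, |F y| * |V y| ∂ν) ^ 2 := by
  rw [covarianceExponents, Finset.sum_pair (by decide)]
  simp [Fin.prod_univ_three, sq]

theorem covariance_comparison_decomposition_general
    {d : ℕ} (q a : EuclideanSpace ℝ (Fin d) → ℝ)
    (hq_meas : Measurable q) (ha_meas : Measurable a)
    (ha_bdd : ∃ M : ℝ, ∀ y, |a y| ≤ M)
    (r : EuclideanSpace ℝ (Fin d) → ℝ) (hr : ∀ y, r y = q y * Real.exp (a y))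
    (hQr_pos : ∀ t > (0:ℝ), ∀ x, 0 < QtOf r t x)
    (hQq_pos : ∀ t > (0:ℝ), ∀ x, 0 < QtOf q t x)
    (hp_prob : ∀ t > (0:ℝ), ∀ x, IsProbabilityMeasure (tiltedOf r t x))
    (hν_prob : ∀ t > (0:ℝ), ∀ x, IsProbabilityMeasure (tiltedOf q t x))
    (hmom_ν : ∀ t > (0:ℝ), ∀ x n, Integrable (fun y => ‖y‖ ^ (n : ℕ)) (tiltedOf q t x)) :
    ∃ (C : ℝ) (Θ : Finset (Fin 3 → ℕ × ℕ × ℕ)), 0 < C ∧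
      (∀ θ ∈ Θ,
        (∑ i, (θ i).1 * (θ i).2.2) = 2 ∧
        (Finset.univ.sup fun i => (θ i).2.1 * (θ i).2.2) = 1) ∧
      ∀ t > (0:ℝ), ∀ x, ∀ h : EuclideanSpace ℝ (Fin d), ‖h‖ = 1 →
        |(∫ y, ⟪h, y - meanOf r t x⟫_ℝ ^ 2 ∂(tiltedOf r t x))
            - ∫ y, ⟪h, y - meanOf q t x⟫_ℝ ^ 2 ∂(tiltedOf q t x)|
          ≤ C * ∑ θ ∈ Θ, ∏ i : Fin 3,
              (∫ y, |⟪h, y - meanOf q t x⟫_ℝ| ^ ((θ i).1) *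
                  |Real.exp (a y) * QtOf q t x / QtOf r t x - 1| ^ ((θ i).2.1)
                ∂(tiltedOf q t x)) ^ ((θ i).2.2) := by
  obtain ⟨M, hM⟩ := ha_bdd
  refine ⟨1, covarianceExponents, one_pos, covarianceExponents_spec, ?_⟩
  intro t ht x h _
  have := hp_prob t ht x
  have := hν_prob t ht x
  have hQq := hQq_pos t ht x
  have hQr := hQr_pos t ht x
  have hw0 : ∀ y, 0 ≤ exp (a y) * QtOf q t x / QtOf r t x := fun y => by positivity
  have hwC : ∀ y, exp (a y) * QtOf q t x / QtOf r t x ≤ exp M * QtOf q t x / QtOf r t x :=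
    fun y => by gcongr; exact (le_abs_self _).trans (hM y)
  have hX : MemLp id 2 (tiltedOf q t x) :=
    (memLp_two_iff_integrable_sq_norm aestronglyMeasurable_id).mpr (hmom_ν t ht x 2)
  rw [one_mul, sum_covarianceExponents, meanOf, meanOf,
    integral_inner_sub_integral_sq_withDensity_sub
      (tiltedOf_eq_withDensity hq_meas ha_meas hr hQq hQr) (by fun_prop) hw0 hwC hX h]
  exact abs_integral_sub_one_mul_sq_sub_sq_le

/-- Comparison of the covariances of `p^{t,x} ∝ r φ^{t,x}` and
`ν^{t,x} ∝ q φ^{t,x}`, where `r = q e^a` with `a` bounded: for every unit vector `h`,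
`|h^⊤ (Cov(p^{t,x}) - Cov(ν^{t,x})) h|` is bounded by a finite sum of products of terms
`(∫ |h^⊤ H_ν|^{θ_{i,1}} |e^{a(y)} Q_t q(x)/Q_t r(x) - 1|^{θ_{i,2}} dν^{t,x})^{θ_{i,3}}`
with `Σᵢ θ_{i,1} θ_{i,3} = 2` and `maxᵢ θ_{i,2} θ_{i,3} = 1`. -/
theorem covariance_comparison_decomposition
    {d : ℕ} (q a : EuclideanSpace ℝ (Fin d) → ℝ)
    (hq_pos : ∀ y, 0 < q y) (hq_meas : Measurable q) (ha_meas : Measurable a)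
    (ha_bdd : ∃ M : ℝ, ∀ y, |a y| ≤ M)
    (r : EuclideanSpace ℝ (Fin d) → ℝ) (hr : ∀ y, r y = q y * Real.exp (a y))
    (hQr_pos : ∀ t > (0:ℝ), ∀ x, 0 < QtOf r t x)
    (hQq_pos : ∀ t > (0:ℝ), ∀ x, 0 < QtOf q t x)
    (hp_prob : ∀ t > (0:ℝ), ∀ x, IsProbabilityMeasure (tiltedOf r t x))
    (hν_prob : ∀ t > (0:ℝ), ∀ x, IsProbabilityMeasure (tiltedOf q t x))
    (hmom_p : ∀ t > (0:ℝ), ∀ x n, Integrable (fun y => ‖y‖ ^ (n : ℕ)) (tiltedOf r t x))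
    (hmom_ν : ∀ t > (0:ℝ), ∀ x n, Integrable (fun y => ‖y‖ ^ (n : ℕ)) (tiltedOf q t x)) :
    ∃ (C : ℝ) (Θ : Finset (Fin 3 → ℕ × ℕ × ℕ)), 0 < C ∧
      (∀ θ ∈ Θ,
        (∑ i, (θ i).1 * (θ i).2.2) = 2 ∧
        (Finset.univ.sup fun i => (θ i).2.1 * (θ i).2.2) = 1) ∧
      ∀ t > (0:ℝ), ∀ x, ∀ h : EuclideanSpace ℝ (Fin d), ‖h‖ = 1 →
        |(∫ y, ⟪h, y - meanOf r t x⟫_ℝ ^ 2 ∂(tiltedOf r t x))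
            - ∫ y, ⟪h, y - meanOf q t x⟫_ℝ ^ 2 ∂(tiltedOf q t x)|
          ≤ C * ∑ θ ∈ Θ, ∏ i : Fin 3,
              (∫ y, |⟪h, y - meanOf q t x⟫_ℝ| ^ ((θ i).1) *
                  |Real.exp (a y) * QtOf q t x / QtOf r t x - 1| ^ ((θ i).2.1)
                ∂(tiltedOf q t x)) ^ ((θ i).2.2) :=
  covariance_comparison_decomposition_general q a hq_meas ha_meas ha_bdd r hr hQr_pos hQq_pos
    hp_prob hν_prob hmom_ν
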